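/- Let φ : ℝ^m → ℝ^n be a linear map. Then the restriction of φ to the nonnegative orthant ℝ_{≥0}^m is a proper map of topological spaces (preimages of compact sets are compact) if and only if ker(φ) ∩ ℝ_{≥0}^m = {0}. -/

import Mathlib

/-!
If a nonzero `x ≥ 0` lies in the kernel, the whole ray `ℝ_{≥0} x` lies in the preimage of `{0}`,
which is then unbounded. Conversely, if the kernel meets the orthant only in `0`, then `‖φ‖`
attains a positive minimum `ε` on the compact set of unit vectors of the orthant; by
homogeneity `‖x‖ ≤ ε⁻¹ ‖φ x‖` on the orthant, so preimages of bounded sets are bounded, and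
preimages of compact sets, being also closed, are compact.
-/

open Set Metric

section Cone

variable {E F : Type*} [NormedAddCommGroup E] [NormedSpace ℝ E]
  [NormedAddCommGroup F] [NormedSpace ℝ F] {C : Set E}

theorem eq_zero_of_isCompact_restrict_preimage_zero (hC : ∀ x ∈ C, ∀ t : ℝ, 0 ≤ t → t • x ∈ C)
    (f : E →ₗ[ℝ] F) (hcompact : IsCompact ((fun x : C => f x) ⁻¹' {0}))
    {x : E} (hx : x ∈ C) (hfx : f x = 0) : x = 0 := by
  obtain ⟨R, hR⟩ := isBounded_iff_forall_norm_le.mp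
    (Subtype.isCompact_iff.mp hcompact).isBounded
  have ray_le : ∀ t : ℝ, 0 ≤ t → t * ‖x‖ ≤ R := fun t ht => by
    have := hR (t • x) ⟨⟨t • x, hC x hx t ht⟩, by simp [hfx], rfl⟩
    rwa [norm_smul, Real.norm_of_nonneg ht] at this
  by_contra hx0
  have hxpos : 0 < ‖x‖ := norm_pos_iff.mpr hx0
  have hRpos : 0 < R := hxpos.trans_le (by simpa using ray_le 1 zero_le_one)
  have := ray_le (2 * R / ‖x‖) (by positivity)
  rw [div_mul_cancel₀ _ hxpos.ne'] at this
  linarith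

theorem exists_norm_le_mul_norm_of_ker_inter_eq_zero [FiniteDimensional ℝ E]
    (hC_closed : IsClosed C) (hC : ∀ x ∈ C, ∀ t : ℝ, 0 ≤ t → t • x ∈ C) (f : E →ₗ[ℝ] F)
    (hker : ∀ x ∈ C, f x = 0 → x = 0) : ∃ c : ℝ, ∀ x ∈ C, ‖x‖ ≤ c * ‖f x‖ := by
  have hf : Continuous f := f.continuous_of_finiteDimensional
  obtain ⟨ε, hε, hε_le⟩ := (isCompact_sphere (0 : E) 1).inter_right hC_closed
    |>.exists_forall_le' hf.norm.continuousOn (a := 0) fun x ⟨hx1, hxC⟩ =>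
      norm_pos_iff.mpr fun hfx => by simp [hker x hxC hfx] at hx1
  refine ⟨ε⁻¹, fun x hx => ?_⟩
  rcases eq_or_ne x 0 with rfl | hx0
  · simp
  have hxpos : 0 < ‖x‖ := norm_pos_iff.mpr hx0
  have hunit : ‖x‖⁻¹ • x ∈ sphere (0 : E) 1 ∩ C :=
    ⟨by simp [norm_smul, hxpos.ne'], hC x hx _ (inv_nonneg.mpr hxpos.le)⟩
  have hmin := hε_le _ hunit
  rw [map_smul, norm_smul, Real.norm_of_nonneg (inv_nonneg.mpr hxpos.le), inv_mul_eq_div,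
    le_div_iff₀ hxpos] at hmin
  rw [← div_eq_inv_mul, le_div_iff₀ hε]
  linarith

end Cone

theorem isCompact_restrict_preimage_of_norm_le_mul_norm {E F : Type*} [NormedAddCommGroup E]
    [ProperSpace E] [NormedAddCommGroup F] {C : Set E} (hC_closed : IsClosed C) {f : E → F}
    (hf : Continuous f) {c : ℝ} (hbound : ∀ x ∈ C, ‖x‖ ≤ c * ‖f x‖) {K : Set F}
    (hK : IsCompact K) : IsCompact ((fun x : C => f x) ⁻¹' K) := by
  change IsCompact (Subtype.val ⁻¹' (f ⁻¹' K))
  rw [Subtype.isCompact_iff, Subtype.image_preimage_coe]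
  obtain ⟨R, hR⟩ := isBounded_iff_forall_norm_le.mp hK.isBounded
  refine (isCompact_closedBall (0 : E) (|c| * R)).of_isClosed_subset
    (hC_closed.inter (hK.isClosed.preimage hf)) fun x ⟨hxC, hxK⟩ => ?_
  rw [mem_closedBall_zero_iff]
  calc ‖x‖ ≤ c * ‖f x‖ := hbound x hxC
    _ ≤ |c| * ‖f x‖ := by gcongr; exact le_abs_self c
    _ ≤ |c| * R := by gcongr; exact hR _ hxK

theorem isClosed_nonneg_orthant (m : ℕ) : IsClosed {x : Fin m → ℝ | ∀ i, 0 ≤ x i} := by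
  simp only [ofPred_forall]
  exact isClosed_iInter fun i => isClosed_le continuous_const (continuous_apply i)

/-- The restriction of a linear map `φ : ℝ^m → ℝ^n` to the nonnegative orthant is a
proper map of topological spaces if and only if `ker φ ∩ ℝ_{≥0}^m = {0}`. -/
theorem stmt2 (m n : ℕ) (φ : (Fin m → ℝ) →ₗ[ℝ] (Fin n → ℝ)) :
    (Continuous (fun x : {x : Fin m → ℝ // ∀ i, 0 ≤ x i} => φ x.1) ∧
      ∀ K : Set (Fin n → ℝ), IsCompact K →
        IsCompact ((fun x : {x : Fin m → ℝ // ∀ i, 0 ≤ x i} => φ x.1) ⁻¹' K)) ↔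
    ∀ x : Fin m → ℝ, (∀ i, 0 ≤ x i) → φ x = 0 → x = 0 := by
  have hcone : ∀ x ∈ {x : Fin m → ℝ | ∀ i, 0 ≤ x i}, ∀ t : ℝ, 0 ≤ t →
      t • x ∈ {x : Fin m → ℝ | ∀ i, 0 ≤ x i} := fun x hx t ht i => mul_nonneg ht (hx i)
  refine ⟨fun ⟨_, hproper⟩ x hx => eq_zero_of_isCompact_restrict_preimage_zero hcone φ
    (hproper {0} isCompact_singleton) hx, fun hker => ⟨?_, fun K hK => ?_⟩⟩
  · exact φ.continuous_of_finiteDimensional.comp continuous_subtype_val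
  · obtain ⟨c, hc⟩ := exists_norm_le_mul_norm_of_ker_inter_eq_zero (isClosed_nonneg_orthant m)
      hcone φ hker
    exact isCompact_restrict_preimage_of_norm_le_mul_norm (isClosed_nonneg_orthant m)
      φ.continuous_of_finiteDimensional hc hK
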